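/- For each p ∈ (1,∞) there exists a constant c ≥ 1 depending only on p such that for all P, Q ∈ ℝⁿ: c^{−1} |V(P) − V(Q)|² ≤ (A(P) − A(Q)) · (P − Q) ≤ c |V(P) − V(Q)|², and moreover c^{−1} φ_{|Q|}(|P − Q|) ≤ (A(P) − A(Q)) · (P − Q) ≤ c φ_{|Q|}(|P − Q|). -/

import Mathlib

/-! Write `a = ‖P‖`, `b = ‖Q‖`, `t = ⟪P, Q⟫`, so that `|t| ≤ a b`. Then `(A(P) - A(Q)) · (P - Q)`,
`|V(P) - V(Q)|²` and `max(a, b)^{p-2} |P - Q|²` are all affine in `t`, so a two-sided bound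
between any two of them need only be checked at `t = ± a b`. There, for `b ≤ a`, everything
reduces to comparing `a^r ± b^r` with `a^{r-1} (a ± b)` for `r = p - 1` and `r = p / 2`, which
is Bernoulli's inequality after scaling `b = a s`. Finally `φ_{|Q|}(|P - Q|)` is computed
explicitly and is comparable to `max(|Q|, |P - Q|)^{p-2} |P - Q|²`, and by the triangle
inequality `max(|Q|, |P - Q|)` lies within a factor `2` of `max(|P|, |Q|)`. -/

open MeasureTheory

/-- `A(ξ) := |ξ|^{p-2} ξ` (with `A(0) = 0`). -/
noncomputable def Aop (p : ℝ) {n : ℕ} (ξ : EuclideanSpace ℝ (Fin n)) :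
    EuclideanSpace ℝ (Fin n) :=
  ‖ξ‖ ^ (p - 2) • ξ

/-- `V(ξ) := |ξ|^{(p-2)/2} ξ` (with `V(0) = 0`). -/
noncomputable def Vop (p : ℝ) {n : ℕ} (ξ : EuclideanSpace ℝ (Fin n)) :
    EuclideanSpace ℝ (Fin n) :=
  ‖ξ‖ ^ ((p - 2) / 2) • ξ

/-- The shifted N-function `φ_a(t) := ∫₀ᵗ (max a s)^{p-2} s ds`. -/
noncomputable def phiShift (p a t : ℝ) : ℝ :=
  ∫ s in (0 : ℝ)..t, max a s ^ (p - 2) * s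

namespace PLaplace

open Real

theorem affine_le_of_endpoints {x₀ x₁ y₀ y₁ c s t : ℝ} (ht : |t| ≤ s)
    (hs : x₀ - x₁ * s ≤ c * (y₀ - y₁ * s)) (hns : x₀ - x₁ * -s ≤ c * (y₀ - y₁ * -s)) :
    x₀ - x₁ * t ≤ c * (y₀ - y₁ * t) := by
  obtain ⟨hts, hst⟩ := abs_le.1 ht
  rcases le_total (x₁ - c * y₁) 0 with h | h <;> nlinarith

def Comparable (c x y : ℝ) : Prop := x ≤ c * y ∧ y ≤ c * x

namespace Comparable

variable {c d x y z : ℝ}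

theorem symm (h : Comparable c x y) : Comparable c y x := And.symm h

theorem mono (h : Comparable c x y) (hc : 0 < c) (hcd : c ≤ d) (hy : 0 ≤ y) :
    Comparable d x y :=
  have hx : 0 ≤ x := nonneg_of_mul_nonneg_right (hy.trans h.2) hc
  ⟨h.1.trans (mul_le_mul_of_nonneg_right hcd hy),
    h.2.trans (mul_le_mul_of_nonneg_right hcd hx)⟩

theorem trans (hxy : Comparable c x y) (hyz : Comparable d y z) (hc : 0 ≤ c) (hd : 0 ≤ d) :
    Comparable (c * d) x z := by
  constructor
  · calc x ≤ c * y := hxy.1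
      _ ≤ c * (d * z) := mul_le_mul_of_nonneg_left hyz.1 hc
      _ = c * d * z := by ring
  · calc z ≤ d * y := hyz.2
      _ ≤ d * (c * x) := mul_le_mul_of_nonneg_left hxy.2 hd
      _ = c * d * x := by ring

theorem mul_right (h : Comparable c x y) (hz : 0 ≤ z) : Comparable c (x * z) (y * z) := by
  constructor <;> nlinarith [h.1, h.2]

theorem mul_left (h : Comparable c x y) (hz : 0 ≤ z) : Comparable c (z * x) (z * y) := by
  constructor <;> nlinarith [h.1, h.2]

theorem sq (h : Comparable c x y) (hx : 0 ≤ x) (hy : 0 ≤ y) :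
    Comparable (c ^ 2) (x ^ 2) (y ^ 2) :=
  ⟨(pow_le_pow_left₀ hx h.1 2).trans_eq (mul_pow c y 2),
    (pow_le_pow_left₀ hy h.2 2).trans_eq (mul_pow c x 2)⟩

theorem inv_mul_le_and_le_mul (h : Comparable c x y) (hc : 0 < c) :
    c⁻¹ * y ≤ x ∧ x ≤ c * y :=
  ⟨(inv_mul_le_iff₀ hc).2 h.2, h.1⟩

theorem of_mem_Icc {u : ℝ} (hc : 0 ≤ c) (hx : x ∈ Set.Icc u (c * u))
    (hy : y ∈ Set.Icc u (c * u)) : Comparable c x y :=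
  ⟨hx.2.trans (mul_le_mul_of_nonneg_left hy.1 hc),
    hy.2.trans (mul_le_mul_of_nonneg_left hx.1 hc)⟩

theorem of_endpoints {x₀ x₁ y₀ y₁ s t : ℝ} (ht : |t| ≤ s)
    (hs : Comparable c (x₀ - x₁ * s) (y₀ - y₁ * s))
    (hns : Comparable c (x₀ - x₁ * -s) (y₀ - y₁ * -s)) :
    Comparable c (x₀ - x₁ * t) (y₀ - y₁ * t) :=
  ⟨affine_le_of_endpoints ht hs.1 hns.1, affine_le_of_endpoints ht hs.2 hns.2⟩

end Comparable

theorem two_le_add_inv {r : ℝ} (hr : 0 < r) : 2 ≤ r + r⁻¹ := by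
  have := mul_inv_cancel₀ hr.ne'
  nlinarith [sq_nonneg (r - 1), inv_pos.2 hr]

theorem comparable_one_sub_rpow {r s : ℝ} (hr : 0 < r) (hs₀ : 0 ≤ s) (hs₁ : s ≤ 1) :
    Comparable (r + r⁻¹) (1 - s ^ r) (1 - s) := by
  have hr' : 0 < r⁻¹ := inv_pos.2 hr
  rcases le_total 1 r with h | h
  · have hbernoulli := one_add_mul_self_le_rpow_one_add (show -1 ≤ s - 1 by linarith) h
    rw [add_sub_cancel] at hbernoulli
    have hpow := rpow_le_self_of_le_one hs₀ hs₁ h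
    constructor <;> nlinarith
  · have hbernoulli := rpow_one_add_le_one_add_mul_self (show -1 ≤ s - 1 by linarith) hr.le h
    rw [add_sub_cancel] at hbernoulli
    have hpow := self_le_rpow_of_le_one hs₀ hs₁ h
    have hr₁ : 1 ≤ r⁻¹ := one_le_inv_iff₀.2 ⟨hr, h⟩
    have hinv : r⁻¹ * r = 1 := inv_mul_cancel₀ hr.ne'
    constructor
    · nlinarith
    · nlinarith [mul_le_mul_of_nonneg_left hbernoulli hr'.le, rpow_le_one hs₀ hs₁ hr.le]

theorem comparable_one_add_rpow {r s : ℝ} (hr : 0 < r) (hs₀ : 0 ≤ s) (hs₁ : s ≤ 1) :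
    Comparable (r + r⁻¹) (1 + s ^ r) (1 + s) := by
  have hsr : s ^ r ≤ 1 := rpow_le_one hs₀ hs₁ hr.le
  refine (Comparable.of_mem_Icc (u := 1) zero_le_two ?_ ?_).mono two_pos
    (two_le_add_inv hr) ?_
  · constructor <;> linarith [rpow_nonneg hs₀ r]
  · constructor <;> linarith
  · linarith

theorem exists_eq_mul_of_le {a b : ℝ} (ha : 0 < a) (hb : 0 ≤ b) (hba : b ≤ a) :
    ∃ s, 0 ≤ s ∧ s ≤ 1 ∧ b = a * s :=
  ⟨b / a, div_nonneg hb ha.le, div_le_one_of_le₀ hba ha.le, by field_simp⟩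

theorem comparable_rpow_sub_rpow {r a b : ℝ} (hr : 0 < r) (hb : 0 ≤ b) (hba : b ≤ a) :
    Comparable (r + r⁻¹) (a ^ r - b ^ r) (a ^ (r - 1) * (a - b)) := by
  rcases (hb.trans hba).eq_or_lt with rfl | ha
  · obtain rfl : b = 0 := le_antisymm hba hb
    simp [Comparable]
  obtain ⟨s, hs₀, hs₁, rfl⟩ := exists_eq_mul_of_le ha hb hba
  convert (comparable_one_sub_rpow hr hs₀ hs₁).mul_left (rpow_nonneg ha.le r) using 1
  · rw [mul_rpow ha.le hs₀]; ring
  · rw [rpow_sub_one ha.ne']; field_simp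

theorem comparable_rpow_add_rpow {r a b : ℝ} (hr : 0 < r) (hb : 0 ≤ b) (hba : b ≤ a) :
    Comparable (r + r⁻¹) (a ^ r + b ^ r) (a ^ (r - 1) * (a + b)) := by
  rcases (hb.trans hba).eq_or_lt with rfl | ha
  · obtain rfl : b = 0 := le_antisymm hba hb
    simp [Comparable, zero_rpow hr.ne']
  obtain ⟨s, hs₀, hs₁, rfl⟩ := exists_eq_mul_of_le ha hb hba
  convert (comparable_one_add_rpow hr hs₀ hs₁).mul_left (rpow_nonneg ha.le r) using 1
  · rw [mul_rpow ha.le hs₀]; ring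
  · rw [rpow_sub_one ha.ne']; field_simp

theorem rpow_sub_one_mul_self {x r : ℝ} (hx : 0 ≤ x) (hr : r ≠ 0) :
    x ^ (r - 1) * x = x ^ r := by
  rw [← rpow_add_one' hx (by simpa using hr), sub_add_cancel]

theorem rpow_sub_two_mul_sq {x p : ℝ} (hx : 0 ≤ x) (hp : p ≠ 0) :
    x ^ (p - 2) * x ^ 2 = x ^ p := by
  rw [← rpow_two, ← rpow_add' hx (by simpa using hp), sub_add_cancel]

theorem rpow_div_two_sq {x : ℝ} (hx : 0 ≤ x) (r : ℝ) : (x ^ (r / 2)) ^ 2 = x ^ r := by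
  rw [← rpow_mul_natCast hx]; norm_num

/- `(A(P) - A(Q)) · (P - Q)`, `|V(P) - V(Q)|²` and `max(|P|, |Q|)^{p-2} |P - Q|²` as functions of
`a = ‖P‖`, `b = ‖Q‖`, `t = ⟪P, Q⟫`, each written in the shape `x₀ - x₁ * t` of
`Comparable.of_endpoints`. -/

noncomputable def innerAForm (p a b t : ℝ) : ℝ :=
  a ^ p + b ^ p - (a ^ (p - 2) + b ^ (p - 2)) * t

noncomputable def sqVForm (p a b t : ℝ) : ℝ :=
  a ^ p + b ^ p - 2 * (a ^ ((p - 2) / 2) * b ^ ((p - 2) / 2)) * t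

noncomputable def weightedSqForm (p a b t : ℝ) : ℝ :=
  max a b ^ (p - 2) * (a ^ 2 + b ^ 2) - 2 * max a b ^ (p - 2) * t

theorem innerAForm_comm (p a b t : ℝ) : innerAForm p a b t = innerAForm p b a t := by
  unfold innerAForm; ring

theorem sqVForm_comm (p a b t : ℝ) : sqVForm p a b t = sqVForm p b a t := by
  unfold sqVForm; ring

theorem weightedSqForm_comm (p a b t : ℝ) :
    weightedSqForm p a b t = weightedSqForm p b a t := by
  unfold weightedSqForm; rw [max_comm]; ring

section Endpoints

variable {p a b : ℝ}

theorem weightedSqForm_mul_self (hba : b ≤ a) :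
    weightedSqForm p a b (a * b) = a ^ (p - 2) * (a - b) ^ 2 := by
  unfold weightedSqForm; rw [max_eq_left hba]; ring

theorem weightedSqForm_neg_mul_self (hba : b ≤ a) :
    weightedSqForm p a b (-(a * b)) = a ^ (p - 2) * (a + b) ^ 2 := by
  unfold weightedSqForm; rw [max_eq_left hba]; ring

theorem innerAForm_mul_self (hp₀ : p ≠ 0) (hp₁ : p ≠ 1) (ha : 0 ≤ a) (hb : 0 ≤ b) :
    innerAForm p a b (a * b) = (a - b) * (a ^ (p - 1) - b ^ (p - 1)) := by
  have h₁ := rpow_sub_one_mul_self ha (sub_ne_zero.2 hp₁)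
  have h₂ := rpow_sub_one_mul_self hb (sub_ne_zero.2 hp₁)
  have h₃ := rpow_sub_one_mul_self ha hp₀
  have h₄ := rpow_sub_one_mul_self hb hp₀
  rw [show p - 1 - 1 = p - 2 by ring] at h₁ h₂
  unfold innerAForm
  linear_combination -b * h₁ - a * h₂ - h₃ - h₄

theorem innerAForm_neg_mul_self (hp₀ : p ≠ 0) (hp₁ : p ≠ 1) (ha : 0 ≤ a) (hb : 0 ≤ b) :
    innerAForm p a b (-(a * b)) = (a + b) * (a ^ (p - 1) + b ^ (p - 1)) := by
  have h₁ := rpow_sub_one_mul_self ha (sub_ne_zero.2 hp₁)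
  have h₂ := rpow_sub_one_mul_self hb (sub_ne_zero.2 hp₁)
  have h₃ := rpow_sub_one_mul_self ha hp₀
  have h₄ := rpow_sub_one_mul_self hb hp₀
  rw [show p - 1 - 1 = p - 2 by ring] at h₁ h₂
  unfold innerAForm
  linear_combination b * h₁ + a * h₂ - h₃ - h₄

theorem sqVForm_mul_self (hp : p ≠ 0) (ha : 0 ≤ a) (hb : 0 ≤ b) :
    sqVForm p a b (a * b) = (a ^ (p / 2) - b ^ (p / 2)) ^ 2 := by
  have h₁ := rpow_sub_one_mul_self ha (div_ne_zero hp two_ne_zero)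
  have h₂ := rpow_sub_one_mul_self hb (div_ne_zero hp two_ne_zero)
  rw [show p / 2 - 1 = (p - 2) / 2 by ring] at h₁ h₂
  unfold sqVForm
  linear_combination (-2 * b ^ ((p - 2) / 2) * b) * h₁ - 2 * a ^ (p / 2) * h₂
    - rpow_div_two_sq ha p - rpow_div_two_sq hb p

theorem sqVForm_neg_mul_self (hp : p ≠ 0) (ha : 0 ≤ a) (hb : 0 ≤ b) :
    sqVForm p a b (-(a * b)) = (a ^ (p / 2) + b ^ (p / 2)) ^ 2 := by
  have h₁ := rpow_sub_one_mul_self ha (div_ne_zero hp two_ne_zero)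
  have h₂ := rpow_sub_one_mul_self hb (div_ne_zero hp two_ne_zero)
  rw [show p / 2 - 1 = (p - 2) / 2 by ring] at h₁ h₂
  unfold sqVForm
  linear_combination (2 * b ^ ((p - 2) / 2) * b) * h₁ + 2 * a ^ (p / 2) * h₂
    - rpow_div_two_sq ha p - rpow_div_two_sq hb p

end Endpoints

section Interior

variable {p a b t : ℝ}

theorem comparable_innerAForm_weightedSqForm (hp : 1 < p) (ha : 0 ≤ a) (hb : 0 ≤ b)
    (ht : |t| ≤ a * b) :
    Comparable ((p - 1) + (p - 1)⁻¹) (innerAForm p a b t) (weightedSqForm p a b t) := by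
  wlog hba : b ≤ a generalizing a b
  · rw [innerAForm_comm, weightedSqForm_comm]
    exact this hb ha (by rwa [mul_comm]) (le_of_not_ge hba)
  have hr : 0 < p - 1 := by linarith
  have hp₀ : p ≠ 0 := by linarith
  have hp₁ : p ≠ 1 := hp.ne'
  have hweight (x : ℝ) : a ^ (p - 2) * x ^ 2 = x * (a ^ (p - 1 - 1) * x) := by
    rw [show p - 1 - 1 = p - 2 by ring]; ring
  have hs : Comparable (p - 1 + (p - 1)⁻¹) (innerAForm p a b (a * b))
      (weightedSqForm p a b (a * b)) := by
    rw [innerAForm_mul_self hp₀ hp₁ ha hb, weightedSqForm_mul_self hba, hweight]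
    exact (comparable_rpow_sub_rpow hr hb hba).mul_left (sub_nonneg.2 hba)
  have hns : Comparable (p - 1 + (p - 1)⁻¹) (innerAForm p a b (-(a * b)))
      (weightedSqForm p a b (-(a * b))) := by
    rw [innerAForm_neg_mul_self hp₀ hp₁ ha hb, weightedSqForm_neg_mul_self hba, hweight]
    exact (comparable_rpow_add_rpow hr hb hba).mul_left (add_nonneg ha hb)
  exact Comparable.of_endpoints ht hs hns

theorem comparable_sqVForm_weightedSqForm (hp : 0 < p) (ha : 0 ≤ a) (hb : 0 ≤ b)
    (ht : |t| ≤ a * b) :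
    Comparable ((p / 2 + (p / 2)⁻¹) ^ 2) (sqVForm p a b t) (weightedSqForm p a b t) := by
  wlog hba : b ≤ a generalizing a b
  · rw [sqVForm_comm, weightedSqForm_comm]
    exact this hb ha (by rwa [mul_comm]) (le_of_not_ge hba)
  have hr : 0 < p / 2 := by linarith
  have hweight (x : ℝ) : a ^ (p - 2) * x ^ 2 = (a ^ (p / 2 - 1) * x) ^ 2 := by
    rw [mul_pow, show p / 2 - 1 = (p - 2) / 2 by ring, rpow_div_two_sq ha]
  have hpow : b ^ (p / 2) ≤ a ^ (p / 2) := rpow_le_rpow hb hba hr.le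
  have hs : Comparable ((p / 2 + (p / 2)⁻¹) ^ 2) (sqVForm p a b (a * b))
      (weightedSqForm p a b (a * b)) := by
    rw [sqVForm_mul_self hp.ne' ha hb, weightedSqForm_mul_self hba, hweight]
    exact (comparable_rpow_sub_rpow hr hb hba).sq (sub_nonneg.2 hpow)
      (mul_nonneg (rpow_nonneg ha _) (sub_nonneg.2 hba))
  have hns : Comparable ((p / 2 + (p / 2)⁻¹) ^ 2) (sqVForm p a b (-(a * b)))
      (weightedSqForm p a b (-(a * b))) := by
    rw [sqVForm_neg_mul_self hp.ne' ha hb, weightedSqForm_neg_mul_self hba, hweight]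
    exact (comparable_rpow_add_rpow hr hb hba).sq (by positivity)
      (mul_nonneg (rpow_nonneg ha _) (add_nonneg ha hb))
  exact Comparable.of_endpoints ht hs hns

end Interior

theorem rpow_le_two_rpow_abs_mul {x y : ℝ} (r : ℝ) (hx : 0 ≤ x) (hxy : x ≤ 2 * y)
    (hyx : y ≤ 2 * x) : x ^ r ≤ 2 ^ |r| * y ^ r := by
  have h2 : (1 : ℝ) ≤ 2 ^ |r| := one_le_rpow one_le_two (abs_nonneg r)
  rcases hx.eq_or_lt with rfl | hx
  · obtain rfl : y = 0 := by linarith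
    exact le_mul_of_one_le_left (rpow_nonneg le_rfl r) h2
  have hy : 0 < y := by linarith
  rcases le_total 0 r with hr | hr
  · calc x ^ r ≤ (2 * y) ^ r := rpow_le_rpow hx.le hxy hr
      _ = 2 ^ |r| * y ^ r := by rw [mul_rpow zero_le_two hy.le, abs_of_nonneg hr]
  · calc x ^ r ≤ (y / 2) ^ r := rpow_le_rpow_of_nonpos (by positivity) (by linarith) hr
      _ = 2 ^ |r| * y ^ r := by
        rw [div_rpow hy.le zero_le_two, abs_of_nonpos hr, rpow_neg zero_le_two]; ring

theorem comparable_rpow_of_le_two_mul {x y : ℝ} (r : ℝ) (hx : 0 ≤ x) (hxy : x ≤ 2 * y)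
    (hyx : y ≤ 2 * x) : Comparable (2 ^ |r|) (x ^ r) (y ^ r) :=
  ⟨rpow_le_two_rpow_abs_mul r hx hxy hyx,
    rpow_le_two_rpow_abs_mul r (by linarith) hyx hxy⟩

theorem phiShift_of_le {p a t : ℝ} (ht : 0 ≤ t) (hta : t ≤ a) :
    phiShift p a t = a ^ (p - 2) * t ^ 2 / 2 := by
  have h : Set.EqOn (fun s ↦ max a s ^ (p - 2) * s) (fun s ↦ a ^ (p - 2) * s)
      (Set.uIcc 0 t) := by
    intro s hs
    rw [Set.uIcc_of_le ht] at hs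
    simp only [max_eq_left (hs.2.trans hta)]
  rw [phiShift, intervalIntegral.integral_congr h, intervalIntegral.integral_const_mul,
    integral_id]
  ring

theorem phiShift_of_ge {p a t : ℝ} (hp : 1 < p) (ha : 0 ≤ a) (hat : a ≤ t) :
    phiShift p a t = a ^ p / 2 + (t ^ p - a ^ p) / p := by
  have hlow : Set.EqOn (fun s ↦ max a s ^ (p - 2) * s) (fun s ↦ a ^ (p - 2) * s)
      (Set.uIcc 0 a) := by
    intro s hs
    rw [Set.uIcc_of_le ha] at hs
    simp only [max_eq_left hs.2]
  have hhigh : Set.EqOn (fun s ↦ max a s ^ (p - 2) * s) (fun s ↦ s ^ (p - 1))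
      (Set.uIcc a t) := by
    intro s hs
    rw [Set.uIcc_of_le hat] at hs
    simp only [max_eq_right hs.1]
    rw [show p - 2 = p - 1 - 1 by ring, rpow_sub_one_mul_self (ha.trans hs.1) (by linarith)]
  have hint₁ : IntervalIntegrable (fun s ↦ max a s ^ (p - 2) * s) volume 0 a :=
    ((continuous_const.mul continuous_id).continuousOn.congr hlow).intervalIntegrable
  have hint₂ : IntervalIntegrable (fun s ↦ max a s ^ (p - 2) * s) volume a t :=
    ((continuous_rpow_const (by linarith)).continuousOn.congr hhigh).intervalIntegrable
  rw [phiShift, ← intervalIntegral.integral_add_adjacent_intervals hint₁ hint₂,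
    intervalIntegral.integral_congr hhigh, integral_rpow (Or.inl (by linarith)),
    ← phiShift, phiShift_of_le ha le_rfl, rpow_sub_two_mul_sq ha (by linarith), sub_add_cancel]

theorem comparable_phiShift {p a t : ℝ} (hp : 1 < p) (ha : 0 ≤ a) (ht : 0 ≤ t) :
    Comparable (max 2 p) (phiShift p a t) (max a t ^ (p - 2) * t ^ 2) := by
  have htwo : (2 : ℝ) ≤ max 2 p := le_max_left 2 p
  have hple : p ≤ max 2 p := le_max_right 2 p
  rcases le_total t a with hta | hat
  · rw [phiShift_of_le ht hta, max_eq_left hta]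
    have hweight : 0 ≤ a ^ (p - 2) * t ^ 2 := by positivity
    constructor <;> nlinarith
  · rw [phiShift_of_ge hp ha hat, max_eq_right hat, rpow_sub_two_mul_sq ht (by linarith)]
    have hu : 0 ≤ a ^ p := rpow_nonneg ha p
    have hv : 0 ≤ t ^ p - a ^ p := sub_nonneg.2 (rpow_le_rpow ha hat (by linarith))
    have hvp : (t ^ p - a ^ p) / p ≤ t ^ p - a ^ p := div_le_self hv hp.le
    have hpvp : p * ((t ^ p - a ^ p) / p) = t ^ p - a ^ p := mul_div_cancel₀ _ (by linarith)
    have hvp₀ : 0 ≤ (t ^ p - a ^ p) / p := div_nonneg hv (by linarith)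
    constructor <;> nlinarith

theorem phiShift_nonneg {p a t : ℝ} (ha : 0 ≤ a) (ht : 0 ≤ t) : 0 ≤ phiShift p a t :=
  intervalIntegral.integral_nonneg ht fun s hs ↦
    mul_nonneg (rpow_nonneg (ha.trans (le_max_left a s)) _) hs.1

theorem comparable_max_rpow_mul_sq_phiShift {p a b d : ℝ} (hp : 1 < p) (hb : 0 ≤ b)
    (hd : 0 ≤ d) (hda : d ≤ a + b) (had : a ≤ b + d) :
    Comparable (2 ^ |p - 2| * max 2 p) (max a b ^ (p - 2) * d ^ 2) (phiShift p b d) := by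
  have hb₁ := le_max_right a b
  have hb₂ := le_max_left b d
  have hmax : Comparable (2 ^ |p - 2|) (max a b ^ (p - 2)) (max b d ^ (p - 2)) :=
    comparable_rpow_of_le_two_mul _ (hb.trans hb₁)
      (max_le (by linarith [le_max_right b d]) (by linarith))
      (max_le (by linarith) (by linarith [le_max_left a b, le_max_right b d]))
  exact (hmax.mul_right (sq_nonneg d)).trans (comparable_phiShift hp hb hd).symm
    (by positivity) (by positivity)

section Vectors

variable {p : ℝ} {n : ℕ}

theorem inner_Aop_sub_Aop (hp : p ≠ 0) (P Q : EuclideanSpace ℝ (Fin n)) :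
    inner ℝ (Aop p P - Aop p Q) (P - Q) = innerAForm p ‖P‖ ‖Q‖ (inner ℝ P Q) := by
  simp only [Aop, innerAForm, inner_sub_left, inner_sub_right, real_inner_smul_left,
    real_inner_self_eq_norm_sq, real_inner_comm Q P]
  rw [← rpow_sub_two_mul_sq (norm_nonneg P) hp, ← rpow_sub_two_mul_sq (norm_nonneg Q) hp]
  ring

theorem norm_Vop_sub_Vop_sq (hp : p ≠ 0) (P Q : EuclideanSpace ℝ (Fin n)) :
    ‖Vop p P - Vop p Q‖ ^ 2 = sqVForm p ‖P‖ ‖Q‖ (inner ℝ P Q) := by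
  have hP := rpow_nonneg (norm_nonneg P) ((p - 2) / 2)
  have hQ := rpow_nonneg (norm_nonneg Q) ((p - 2) / 2)
  rw [norm_sub_sq_real]
  simp only [Vop, sqVForm, norm_smul, real_inner_smul_left, real_inner_smul_right,
    Real.norm_eq_abs, abs_of_nonneg hP, abs_of_nonneg hQ, mul_pow,
    rpow_div_two_sq (norm_nonneg _), rpow_sub_two_mul_sq (norm_nonneg _) hp]
  ring

theorem weightedSqForm_norm_inner (P Q : EuclideanSpace ℝ (Fin n)) :
    weightedSqForm p ‖P‖ ‖Q‖ (inner ℝ P Q) = max ‖P‖ ‖Q‖ ^ (p - 2) * ‖P - Q‖ ^ 2 := by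
  rw [norm_sub_sq_real, weightedSqForm]
  ring

theorem comparable_inner_Aop_sub_Aop (hp : 1 < p) (P Q : EuclideanSpace ℝ (Fin n)) :
    Comparable (p - 1 + (p - 1)⁻¹) (inner ℝ (Aop p P - Aop p Q) (P - Q))
      (max ‖P‖ ‖Q‖ ^ (p - 2) * ‖P - Q‖ ^ 2) := by
  rw [inner_Aop_sub_Aop (by linarith), ← weightedSqForm_norm_inner]
  exact comparable_innerAForm_weightedSqForm hp (norm_nonneg P) (norm_nonneg Q)
    (abs_real_inner_le_norm P Q)

theorem comparable_norm_Vop_sub_Vop_sq (hp : 0 < p) (P Q : EuclideanSpace ℝ (Fin n)) :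
    Comparable ((p / 2 + (p / 2)⁻¹) ^ 2) (‖Vop p P - Vop p Q‖ ^ 2)
      (max ‖P‖ ‖Q‖ ^ (p - 2) * ‖P - Q‖ ^ 2) := by
  rw [norm_Vop_sub_Vop_sq hp.ne', ← weightedSqForm_norm_inner]
  exact comparable_sqVForm_weightedSqForm hp (norm_nonneg P) (norm_nonneg Q)
    (abs_real_inner_le_norm P Q)

end Vectors

theorem exists_comparable_inner_Aop_sub_Aop_norm_Vop_sub_Vop_sq {p : ℝ} (hp : 1 < p) :
    ∃ c, 0 < c ∧ ∀ (n : ℕ) (P Q : EuclideanSpace ℝ (Fin n)),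
      Comparable c (inner ℝ (Aop p P - Aop p Q) (P - Q)) (‖Vop p P - Vop p Q‖ ^ 2) := by
  have hcA := two_le_add_inv (show 0 < p - 1 by linarith)
  have hcV : 0 < (p / 2 + (p / 2)⁻¹) ^ 2 := by
    nlinarith [two_le_add_inv (show 0 < p / 2 by linarith)]
  refine ⟨(p - 1 + (p - 1)⁻¹) * (p / 2 + (p / 2)⁻¹) ^ 2, mul_pos (by linarith) hcV,
    fun n P Q ↦ ?_⟩
  exact (comparable_inner_Aop_sub_Aop hp P Q).trans
    (comparable_norm_Vop_sub_Vop_sq (by linarith) P Q).symm (by linarith) hcV.le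

theorem exists_comparable_inner_Aop_sub_Aop_phiShift {p : ℝ} (hp : 1 < p) :
    ∃ c, 0 < c ∧ ∀ (n : ℕ) (P Q : EuclideanSpace ℝ (Fin n)),
      Comparable c (inner ℝ (Aop p P - Aop p Q) (P - Q)) (phiShift p ‖Q‖ ‖P - Q‖) := by
  have hcA := two_le_add_inv (show 0 < p - 1 by linarith)
  have hcΦ : 0 < 2 ^ |p - 2| * max 2 p := by positivity
  refine ⟨(p - 1 + (p - 1)⁻¹) * (2 ^ |p - 2| * max 2 p), mul_pos (by linarith) hcΦ,
    fun n P Q ↦ ?_⟩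
  exact (comparable_inner_Aop_sub_Aop hp P Q).trans
    (comparable_max_rpow_mul_sq_phiShift hp (norm_nonneg Q) (norm_nonneg (P - Q))
      (norm_sub_le P Q) (by linarith [norm_sub_norm_le P Q]))
    (by linarith) hcΦ.le

end PLaplace

open PLaplace in
/-- For each `p ∈ (1, ∞)` there is a constant `c ≥ 1` depending only on
`p` such that for all `P, Q ∈ ℝⁿ`:
`c⁻¹ |V(P) - V(Q)|² ≤ (A(P) - A(Q)) · (P - Q) ≤ c |V(P) - V(Q)|²` and
`c⁻¹ φ_{|Q|}(|P - Q|) ≤ (A(P) - A(Q)) · (P - Q) ≤ c φ_{|Q|}(|P - Q|)`. -/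
theorem stmt10 (p : ℝ) (hp : 1 < p) :
    ∃ c : ℝ, 1 ≤ c ∧
      ∀ (n : ℕ) (P Q : EuclideanSpace ℝ (Fin n)),
        c⁻¹ * ‖Vop p P - Vop p Q‖ ^ 2 ≤ inner ℝ (Aop p P - Aop p Q) (P - Q) ∧
        (inner ℝ (Aop p P - Aop p Q) (P - Q) : ℝ) ≤ c * ‖Vop p P - Vop p Q‖ ^ 2 ∧
        c⁻¹ * phiShift p ‖Q‖ ‖P - Q‖ ≤ inner ℝ (Aop p P - Aop p Q) (P - Q) ∧
        (inner ℝ (Aop p P - Aop p Q) (P - Q) : ℝ) ≤ c * phiShift p ‖Q‖ ‖P - Q‖ := by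
  obtain ⟨c₁, hc₁, hV⟩ := exists_comparable_inner_Aop_sub_Aop_norm_Vop_sub_Vop_sq hp
  obtain ⟨c₂, hc₂, hΦ⟩ := exists_comparable_inner_Aop_sub_Aop_phiShift hp
  set c := max 1 (max c₁ c₂)
  have hc : 0 < c := zero_lt_one.trans_le (le_max_left _ _)
  refine ⟨c, le_max_left _ _, fun n P Q ↦ ?_⟩
  obtain ⟨hV₁, hV₂⟩ := ((hV n P Q).mono hc₁ (le_max_of_le_right (le_max_left _ _))
    (sq_nonneg _)).inv_mul_le_and_le_mul hc
  obtain ⟨hΦ₁, hΦ₂⟩ := ((hΦ n P Q).mono hc₂ (le_max_of_le_right (le_max_right _ _))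
    (phiShift_nonneg (norm_nonneg Q) (norm_nonneg _))).inv_mul_le_and_le_mul hc
  exact ⟨hV₁, hV₂, hΦ₁, hΦ₂⟩
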